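/- arXiv:0903.2634 — 3 statements merged into one kernel-verified Lean document; each statement's English description precedes it below -/
import Mathlib

section
/- There exist ε₀ > 0, ε₁ > 0 and n₀ ∈ ℕ such that for all n ≥ n₀, every deletion profile T, every m > 0 satisfying condition (vol2), and every N ∈ ℕ with N ≤ e^{n^{ε₀}}: E[Vol_{(ℝ^n)^N}(K_{T,m}^N ∩ F)] ≤ (1 + e^{-n^{ε₁}})·(E[Vol(K_{T,m})])^N, where Vol_{(ℝ^n)^N} denotes Lebesgue measure on (ℝ^n)^N and K^N is the N-fold Cartesian product of K. (Lemma 2(iii).) -/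
open MeasureTheory Real
open scoped ENNReal

noncomputable section

/-- `ℝ^n` with the Euclidean structure. -/
abbrev Euc (n : ℕ) := EuclideanSpace ℝ (Fin n)

/-- `D_n`, the closed unit Euclidean ball in `ℝ^n` centered at the origin. -/
def Dball (n : ℕ) : Set (Euc n) := Metric.closedBall 0 1

/-- `S^{n-1}`, the unit sphere in `ℝ^n`. -/
abbrev Sph (n : ℕ) := Metric.sphere (0 : Euc n) 1

/-- `σ`, the rotation-invariant probability measure on the sphere `S^{n-1}`
(the normalized spherical measure). -/
def sphσ (n : ℕ) : Measure (Sph n) :=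
  ((volume : Measure (Euc n)).toSphere Set.univ)⁻¹ • (volume : Measure (Euc n)).toSphere

/-- The uniform probability measure on a set `K ⊆ ℝ^n`. -/
def uniformOn {n : ℕ} (K : Set (Euc n)) : Measure (Euc n) :=
  (volume K)⁻¹ • volume.restrict K

/-- A deletion profile: a map `T` assigning to each `θ ∈ S^{n-1}` a convex body `T(θ)` with
`T₀(θ) ⊆ T(θ) ⊆ D_n`, where `T₀(θ) = D_n ∩ {x : ⟨x,θ⟩ ≤ n^{-1/3}}`, such that
`{(x,θ) : x ∈ T(θ)}` is Borel. -/
structure DeletionProfile (n : ℕ) where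
  T : Sph n → Set (Euc n)
  isCompact : ∀ θ, IsCompact (T θ)
  convex : ∀ θ, Convex ℝ (T θ)
  interior_nonempty : ∀ θ, (interior (T θ)).Nonempty
  lower : ∀ θ : Sph n,
    Dball n ∩ {x | (inner ℝ x (θ : Euc n) : ℝ) ≤ (n : ℝ) ^ (-(1/3) : ℝ)} ⊆ T θ
  upper : ∀ θ, T θ ⊆ Dball n
  measurable : MeasurableSet {p : Euc n × Sph n | p.1 ∈ T p.2}

/-- `A(x) = {θ ∈ S^{n-1} : x ∉ T(θ)}`. -/
def Aset {n : ℕ} (T : DeletionProfile n) (x : Euc n) : Set (Sph n) := {θ | x ∉ T.T θ}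

/-- The body obtained from `D_n` by the deletions given by directions `θ₁, …, θ_k`:
`D_n ∩ ⋂_i T(θᵢ)`. -/
def Kbody {n : ℕ} (T : DeletionProfile n) {k : ℕ} (θ : Fin k → Sph n) : Set (Euc n) :=
  Dball n ∩ ⋂ i, T.T (θ i)

/-- The Poisson weight `P(ζ = k) = e^{-m} m^k / k!`. -/
def poissonWt (m : ℝ) (k : ℕ) : ℝ≥0∞ :=
  ENNReal.ofReal (Real.exp (-m) * m ^ k / (Nat.factorial k))

/-- The law of `k` i.i.d. directions, each with law `σ`. -/
def dirPi (n k : ℕ) : Measure (Fin k → Sph n) := Measure.pi fun _ => sphσ n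

/-- The probability that the random body `K_{T,m}` satisfies a property `Q`:
first a Poisson(`m`) number `ζ` of i.i.d. uniform directions `θ₁, …, θ_ζ` is generated,
and `K_{T,m} = D_n ∩ ⋂_{i≤ζ} T(θᵢ)`. -/
def bodyProb {n : ℕ} (T : DeletionProfile n) (m : ℝ) (Q : Set (Euc n) → Prop) : ℝ≥0∞ :=
  ∑' k : ℕ, poissonWt m k * dirPi n k {θ | Q (Kbody T θ)}

/-- The expectation `E[φ(K_{T,m})]` for `φ` a (`ℝ≥0∞`-valued) function of the random body. -/
def bodyLExp {n : ℕ} (T : DeletionProfile n) (m : ℝ) (φ : Set (Euc n) → ℝ≥0∞) : ℝ≥0∞ :=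
  ∑' k : ℕ, poissonWt m k * ∫⁻ θ, φ (Kbody T θ) ∂(dirPi n k)

/-- `f̃(x) = P(x ∈ K_{T,m})`. -/
def fTilde {n : ℕ} (T : DeletionProfile n) (m : ℝ) (x : Euc n) : ℝ≥0∞ :=
  bodyProb T m (fun K => x ∈ K)

/-- `P_{T,m}(A)`: the probability of `A ⊆ (D_n)^N` under the process that first generates the
random body `K = K_{T,m}` and then samples `N` i.i.d. points uniformly from `K`. -/
def sampleProb {n : ℕ} (T : DeletionProfile n) (m : ℝ) (N : ℕ)
    (A : Set (Fin N → Euc n)) : ℝ≥0∞ :=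
  ∑' k : ℕ, poissonWt m k *
    ∫⁻ θ, Measure.pi (fun _ : Fin N => uniformOn (Kbody T θ)) A ∂(dirPi n k)

/-- The event `F ⊆ (D_n)^N`: the set of `N`-tuples `p = (x₁,…,x_N)` of points of `D_n` such
that `σ(A(xᵢ) ∩ A(xⱼ)) < e^{-n^{0.1}}·σ(A(xⱼ))` for all `i ≠ j`. -/
def Fevent {n : ℕ} (T : DeletionProfile n) (N : ℕ) : Set (Fin N → Euc n) :=
  {p | (∀ i, p i ∈ Dball n) ∧ ∀ i j, i ≠ j →
    sphσ n (Aset T (p i) ∩ Aset T (p j)) <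
      ENNReal.ofReal (Real.exp (-(n : ℝ) ^ (0.1 : ℝ))) * sphσ n (Aset T (p j))}

/-- Condition (vol2): `P(θ ∈ K_{T,m}) ≥ e^{-n^{ε₀}}` for every `θ ∈ S^{n-1}`. -/
def vol2Cond {n : ℕ} (T : DeletionProfile n) (m : ℝ) (ε₀ : ℝ) : Prop :=
  ∀ θ : Sph n, ENNReal.ofReal (Real.exp (-(n : ℝ) ^ ε₀)) ≤ fTilde T m (θ : Euc n)

end

/-! For a Poisson(`m`) number of i.i.d. deletions, a family of points of `D_n` survives in
`K_{T,m}` with probability `exp(-m σ(⋃ A(xᵢ)))`, so by Fubini both expectations are integrals of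
such void probabilities. On `F` the sets `A(xᵢ)` are almost disjoint, and Bonferroni's inequality
gives `∑ σ(A(xᵢ)) ≤ σ(⋃ A(xᵢ)) + N e^{-n^{0.1}} ∑ σ(A(xᵢ))`. Condition (vol2) together with the
star-shapedness of every `T(θ)` about `0` bounds each `m σ(A(xᵢ))` by `n^{ε₀}`, so on `F` the joint
survival probability is at most `exp(N² e^{-n^{0.1}} n^{ε₀}) ∏ P(xᵢ ∈ K)`. Integrating over `F`
gives the claim with `ε₀ = ε₁ = 1/100`. -/

open Set Filter

lemma tsum_poissonWt_mul_pow {m r : ℝ} (hm : 0 ≤ m) (hr : 0 ≤ r) :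
    ∑' k, poissonWt m k * ENNReal.ofReal r ^ k = ENNReal.ofReal (exp (-(m * (1 - r)))) := by
  have hsum : HasSum (fun k : ℕ => exp (-m) * ((m * r) ^ k / k.factorial))
      (exp (-m) * exp (m * r)) := by
    rw [Real.exp_eq_exp_ℝ]
    exact (NormedSpace.expSeries_div_hasSum_exp (m * r)).mul_left _
  have hterm : ∀ k, poissonWt m k * ENNReal.ofReal r ^ k
      = ENNReal.ofReal (exp (-m) * ((m * r) ^ k / k.factorial)) := fun k => by
    rw [poissonWt, ← ENNReal.ofReal_pow hr, ← ENNReal.ofReal_mul (by positivity), mul_pow]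
    ring_nf
  rw [tsum_congr hterm, ← ENNReal.ofReal_tsum_of_nonneg (fun k => by positivity) hsum.summable,
    hsum.tsum_eq, ← Real.exp_add]
  ring_nf

/-- The void probability of a Poisson point process. -/
lemma tsum_poissonWt_mul_pi_forall_notMem {α : Type*} [MeasurableSpace α] (μ : Measure α)
    [IsProbabilityMeasure μ] {S : Set α} (hS : MeasurableSet S) {m : ℝ} (hm : 0 ≤ m) :
    ∑' k, poissonWt m k * Measure.pi (fun _ : Fin k => μ) {θ | ∀ j, θ j ∉ S}
      = ENNReal.ofReal (exp (-(m * μ.real S))) := by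
  have hpi : ∀ k, Measure.pi (fun _ : Fin k => μ) {θ | ∀ j, θ j ∉ S}
      = ENNReal.ofReal (1 - μ.real S) ^ k := fun k => by
    have hset : {θ : Fin k → α | ∀ j, θ j ∉ S} = univ.pi fun _ => Sᶜ := by ext; simp
    rw [hset, Measure.pi_pi, Finset.prod_const, Finset.card_univ, Fintype.card_fin,
      ← ofReal_measureReal, measureReal_compl hS, probReal_univ]
  simp_rw [hpi]
  rw [tsum_poissonWt_mul_pow hm (sub_nonneg.2 measureReal_le_one)]
  ring_nf

lemma sum_measureReal_le_measureReal_biUnion_add_sum_inter {α ι : Type*} [MeasurableSpace α]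
    [DecidableEq ι] (μ : Measure α) [IsFiniteMeasure μ] {A : ι → Set α}
    (hA : ∀ i, MeasurableSet (A i)) (s : Finset ι) :
    ∑ i ∈ s, μ.real (A i)
      ≤ μ.real (⋃ i ∈ s, A i) + ∑ i ∈ s, ∑ j ∈ s.erase i, μ.real (A i ∩ A j) := by
  induction s using Finset.induction_on with
  | empty => simp
  | @insert a s ha ih =>
    have hunion : μ.real (A a) + μ.real (⋃ i ∈ s, A i)
        = μ.real (A a ∪ ⋃ i ∈ s, A i) + μ.real (A a ∩ ⋃ i ∈ s, A i) :=
      (measureReal_union_add_inter (MeasurableSet.biUnion s.countable_toSet fun i _ => hA i)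
        (measure_ne_top _ _) (measure_ne_top _ _)).symm
    have hinter : μ.real (A a ∩ ⋃ i ∈ s, A i) ≤ ∑ j ∈ s, μ.real (A a ∩ A j) := by
      rw [inter_iUnion₂]
      exact measureReal_biUnion_finset_le s _
    have hpairs : ∑ i ∈ s, ∑ j ∈ s.erase i, μ.real (A i ∩ A j)
        ≤ ∑ i ∈ s, ∑ j ∈ (insert a s).erase i, μ.real (A i ∩ A j) :=
      Finset.sum_le_sum fun i _ => Finset.sum_le_sum_of_subset_of_nonneg
        (Finset.erase_subset_erase i (Finset.subset_insert a s)) fun _ _ _ => measureReal_nonneg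
    rw [Finset.sum_insert ha, Finset.sum_insert ha, Finset.erase_insert ha,
      Finset.set_biUnion_insert]
    linarith

lemma lintegral_pi_prod_eq_pow {α : Type*} [MeasurableSpace α] (μ : Measure α) [SigmaFinite μ]
    {f : α → ℝ≥0∞} (hf : Measurable f) (N : ℕ) :
    ∫⁻ p : Fin N → α, ∏ i, f (p i) ∂(Measure.pi fun _ => μ) = (∫⁻ x, f x ∂μ) ^ N := by
  induction N with
  | zero => simp
  | succ N ih =>
    have hprod : Measurable fun q : α × (Fin N → α) => f q.1 * ∏ j, f (q.2 j) :=
      (hf.comp measurable_fst).mul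
        (Finset.measurable_prod _ fun j _ => hf.comp ((measurable_pi_apply j).comp measurable_snd))
    calc ∫⁻ p : Fin (N + 1) → α, ∏ i, f (p i) ∂(Measure.pi fun _ => μ)
        = ∫⁻ q : α × (Fin N → α), f q.1 * ∏ j, f (q.2 j) ∂(μ.prod (Measure.pi fun _ => μ)) := by
          rw [← (measurePreserving_piFinSuccAbove (fun _ : Fin (N + 1) => μ) 0).lintegral_comp
            hprod]
          simp [Fin.prod_univ_succAbove _ 0, MeasurableEquiv.piFinSuccAbove, Fin.tail]
      _ = (∫⁻ x, f x ∂μ) ^ (N + 1) := by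
          rw [lintegral_prod_mul (g := fun y : Fin N → α => ∏ j, f (y j)) hf.aemeasurable
            (Finset.measurable_prod _ fun j _ => hf.comp (measurable_pi_apply j)).aemeasurable,
            ih, pow_succ']

instance {n : ℕ} [NeZero n] : IsProbabilityMeasure (sphσ n) := by
  have : Nontrivial (Euc n) := Module.nontrivial_of_finrank_pos (R := ℝ)
    (by rw [finrank_euclideanSpace_fin]; exact Nat.pos_of_neZero n)
  constructor
  rw [sphσ, Measure.smul_apply, smul_eq_mul, Measure.toSphere_apply_univ]
  exact ENNReal.inv_mul_cancel
    (mul_ne_zero (by simp [NeZero.ne n]) (Metric.measure_ball_pos _ _ one_pos).ne')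
    (ENNReal.mul_ne_top (ENNReal.natCast_ne_top _) measure_ball_lt_top.ne)

instance {n k : ℕ} [NeZero n] : IsProbabilityMeasure (dirPi n k) := by
  unfold dirPi; infer_instance

namespace DeletionProfile

variable {n : ℕ} (T : DeletionProfile n)

lemma zero_mem (θ : Sph n) : (0 : Euc n) ∈ T.T θ :=
  T.lower θ ⟨Metric.mem_closedBall_self zero_le_one, by simp [Real.rpow_nonneg]⟩

lemma Aset_smul_subset (x : Euc n) {t : ℝ} (ht₀ : 0 ≤ t) (ht₁ : t ≤ 1) :
    Aset T (t • x) ⊆ Aset T x := fun θ hθ hx => hθ <| by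
  simpa using T.convex θ (T.zero_mem θ) hx (sub_nonneg.2 ht₁) ht₀ (sub_add_cancel 1 t)

lemma measurableSet_setOf_mem_Aset : MeasurableSet {q : Euc n × Sph n | q.2 ∈ Aset T q.1} :=
  T.measurable.compl

lemma measurableSet_Aset (x : Euc n) : MeasurableSet (Aset T x) :=
  T.measurableSet_setOf_mem_Aset.preimage measurable_prodMk_left

lemma measurable_sphσ_Aset_inter {X : Type*} [MeasurableSpace X] [NeZero n] {f g : X → Euc n}
    (hf : Measurable f) (hg : Measurable g) :
    Measurable fun x => sphσ n (Aset T (f x) ∩ Aset T (g x)) :=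
  measurable_measure_prodMk_left <|
    (T.measurableSet_setOf_mem_Aset.preimage ((hf.comp measurable_fst).prodMk measurable_snd)).inter
      (T.measurableSet_setOf_mem_Aset.preimage ((hg.comp measurable_fst).prodMk measurable_snd))

lemma measurableSet_Fevent [NeZero n] (N : ℕ) : MeasurableSet (Fevent T N) := by
  have hA : ∀ j : Fin N, Measurable fun p : Fin N → Euc n => sphσ n (Aset T (p j)) := fun j => by
    simpa using T.measurable_sphσ_Aset_inter (f := fun p : Fin N → Euc n => p j)
      (measurable_pi_apply j) (measurable_pi_apply j)
  refine Measurable.setOf <| (Measurable.forall fun i => ?_).and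
    (Measurable.forall fun i => Measurable.forall fun j => measurable_const.imp ?_)
  · exact measurable_mem.2
      (Metric.isClosed_closedBall.measurableSet.preimage (measurable_pi_apply i))
  · exact measurableSet_setOfPred.1 <| measurableSet_lt
      (T.measurable_sphσ_Aset_inter (measurable_pi_apply i) (measurable_pi_apply j))
      ((hA j).const_mul _)

lemma measurableSet_mem_Kbody (k : ℕ) :
    MeasurableSet {q : (Fin k → Sph n) × Euc n | q.2 ∈ Kbody T q.1} := by
  have hset : {q : (Fin k → Sph n) × Euc n | q.2 ∈ Kbody T q.1}
      = Prod.snd ⁻¹' Dball n ∩ ⋂ j, (fun q : (Fin k → Sph n) × Euc n => (q.2, q.1 j)) ⁻¹'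
          {r : Euc n × Sph n | r.1 ∈ T.T r.2} := by
    ext; simp [Kbody]
  rw [hset]
  exact (Metric.isClosed_closedBall.measurableSet.preimage measurable_snd).inter <|
    MeasurableSet.iInter fun j => T.measurable.preimage (measurable_snd.prodMk measurable_fst.eval)

lemma measurableSet_forall_mem_Kbody (k N : ℕ) :
    MeasurableSet {q : (Fin k → Sph n) × (Fin N → Euc n) | ∀ i, q.2 i ∈ Kbody T q.1} := by
  have hset : {q : (Fin k → Sph n) × (Fin N → Euc n) | ∀ i, q.2 i ∈ Kbody T q.1}
      = ⋂ i, (fun q : (Fin k → Sph n) × (Fin N → Euc n) => (q.1, q.2 i)) ⁻¹'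
          {q | q.2 ∈ Kbody T q.1} := by
    ext; simp
  rw [hset]
  exact MeasurableSet.iInter fun i => (T.measurableSet_mem_Kbody k).preimage
    (measurable_fst.prodMk (measurable_snd.eval))

end DeletionProfile

section RandomBody

variable {n : ℕ} [NeZero n] (T : DeletionProfile n) (m : ℝ)

lemma measurable_bodyProb {X : Type*} [MeasurableSpace X] {Q : X → Set (Euc n) → Prop}
    (hQ : ∀ k, MeasurableSet {q : (Fin k → Sph n) × X | Q q.2 (Kbody T q.1)}) :
    Measurable fun x => bodyProb T m (Q x) :=
  Measurable.tsum fun k => (measurable_measure_prodMk_right (hQ k)).const_mul _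

lemma bodyLExp_measure_setOf_eq_lintegral {X : Type*} [MeasurableSpace X] (ν : Measure X)
    [SFinite ν] {Q : X → Set (Euc n) → Prop}
    (hQ : ∀ k, MeasurableSet {q : (Fin k → Sph n) × X | Q q.2 (Kbody T q.1)}) :
    bodyLExp T m (fun K => ν {x | Q x K}) = ∫⁻ x, bodyProb T m (Q x) ∂ν := by
  have hmeas : ∀ k, Measurable fun x => dirPi n k {θ | Q x (Kbody T θ)} := fun k =>
    measurable_measure_prodMk_right (hQ k)
  unfold bodyLExp bodyProb
  rw [lintegral_tsum fun k => ((hmeas k).const_mul _).aemeasurable]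
  refine tsum_congr fun k => ?_
  rw [lintegral_const_mul _ (hmeas k)]
  exact congrArg _ ((Measure.prod_apply (hQ k)).symm.trans (Measure.prod_apply_symm (hQ k)))

lemma bodyProb_forall_mem {ι : Type*} [Countable ι] (hm : 0 ≤ m) {q : ι → Euc n}
    (hq : ∀ i, q i ∈ Dball n) :
    bodyProb T m (fun K => ∀ i, q i ∈ K)
      = ENNReal.ofReal (exp (-(m * (sphσ n).real (⋃ i, Aset T (q i))))) := by
  have hset : ∀ k, {θ : Fin k → Sph n | ∀ i, q i ∈ Kbody T θ}
      = {θ | ∀ j, θ j ∉ ⋃ i, Aset T (q i)} := fun k => by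
    ext θ
    simp only [Kbody, Aset, mem_ofPred_eq, mem_inter_iff, mem_iInter, mem_iUnion, not_exists,
      not_not]
    exact ⟨fun h j i => (h i).2 j, fun h i => ⟨hq i, fun j => h j i⟩⟩
  simp_rw [bodyProb, hset]
  exact tsum_poissonWt_mul_pi_forall_notMem (sphσ n)
    (MeasurableSet.iUnion fun i => T.measurableSet_Aset (q i)) hm

lemma fTilde_of_mem (hm : 0 ≤ m) {x : Euc n} (hx : x ∈ Dball n) :
    fTilde T m x = ENNReal.ofReal (exp (-(m * (sphσ n).real (Aset T x)))) := by
  simpa [fTilde, iUnion_const] using bodyProb_forall_mem T m hm (q := fun _ : Unit => x) fun _ => hx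

lemma bodyLExp_volume : bodyLExp T m volume = ∫⁻ x, fTilde T m x :=
  bodyLExp_measure_setOf_eq_lintegral T m volume T.measurableSet_mem_Kbody

lemma measurable_fTilde : Measurable (fTilde T m) :=
  measurable_bodyProb T m T.measurableSet_mem_Kbody

variable {T m}

/-- By star-shapedness `A(x) ⊆ A(x / ‖x‖)`, and (vol2) at the direction `x / ‖x‖` reads
`m σ(A(x / ‖x‖)) ≤ n^ε`. -/
lemma mul_measureReal_Aset_le {ε : ℝ} (hm : 0 ≤ m) (hvol : vol2Cond T m ε) {x : Euc n}
    (hx : x ∈ Dball n) : m * (sphσ n).real (Aset T x) ≤ (n : ℝ) ^ ε := by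
  rcases eq_or_ne x 0 with rfl | hx0
  · have : Aset T 0 = ∅ := eq_empty_of_forall_notMem fun θ hθ => hθ (T.zero_mem θ)
    simp [this, Real.rpow_nonneg]
  have hnorm : ‖x‖ ≠ 0 := norm_ne_zero_iff.2 hx0
  set θ : Sph n := ⟨‖x‖⁻¹ • x, by simp [norm_smul, hnorm]⟩
  have hxθ : x = ‖x‖ • (θ : Euc n) := by simp [θ, smul_smul, hnorm]
  have hsub : Aset T x ⊆ Aset T θ := by
    rw [hxθ]
    exact T.Aset_smul_subset _ (norm_nonneg _) (by simpa [Dball] using hx)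
  have hθ : m * (sphσ n).real (Aset T θ) ≤ (n : ℝ) ^ ε := by
    have h := hvol θ
    rw [fTilde_of_mem T m hm (by simp [Dball]), ENNReal.ofReal_le_ofReal_iff (exp_pos _).le,
      exp_le_exp] at h
    linarith
  exact (mul_le_mul_of_nonneg_left (measureReal_mono hsub) hm).trans hθ

lemma sum_measureReal_Aset_le_of_mem_Fevent {N : ℕ} {p : Fin N → Euc n} (hp : p ∈ Fevent T N) :
    ∑ i, (sphσ n).real (Aset T (p i))
      ≤ (sphσ n).real (⋃ i, Aset T (p i))
        + N * exp (-(n : ℝ) ^ (0.1 : ℝ)) * ∑ i, (sphσ n).real (Aset T (p i)) := by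
  classical
  set δ := exp (-(n : ℝ) ^ (0.1 : ℝ))
  have hpair : ∀ i j, i ≠ j →
      (sphσ n).real (Aset T (p i) ∩ Aset T (p j)) ≤ δ * (sphσ n).real (Aset T (p j)) := by
    intro i j hij
    have h := ENNReal.toReal_mono (ENNReal.mul_ne_top ENNReal.ofReal_ne_top (measure_ne_top _ _))
      (hp.2 i j hij).le
    rwa [ENNReal.toReal_mul, ENNReal.toReal_ofReal (exp_pos _).le] at h
  have hrow : ∀ i, ∑ j ∈ Finset.univ.erase i, (sphσ n).real (Aset T (p i) ∩ Aset T (p j))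
      ≤ δ * ∑ j, (sphσ n).real (Aset T (p j)) := fun i => by
    rw [Finset.mul_sum]
    exact (Finset.sum_le_sum fun j hj => hpair i j (Finset.ne_of_mem_erase hj).symm).trans
      (Finset.sum_le_sum_of_subset_of_nonneg (Finset.erase_subset i _) fun _ _ _ => by positivity)
  have hbonf := sum_measureReal_le_measureReal_biUnion_add_sum_inter (sphσ n)
    (fun i => T.measurableSet_Aset (p i)) Finset.univ
  simp only [Finset.mem_univ, iUnion_true] at hbonf
  have hrows := Finset.sum_le_sum fun i (_ : i ∈ Finset.univ) => hrow i
  simp only [Finset.sum_const, Finset.card_univ, Fintype.card_fin, nsmul_eq_mul] at hrows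
  linarith

lemma bodyProb_forall_mem_le_of_mem_Fevent {ε : ℝ} (hm : 0 ≤ m) (hvol : vol2Cond T m ε)
    {N : ℕ} {p : Fin N → Euc n} (hp : p ∈ Fevent T N) :
    bodyProb T m (fun K => ∀ i, p i ∈ K)
      ≤ ENNReal.ofReal (exp (N ^ 2 * exp (-(n : ℝ) ^ (0.1 : ℝ)) * (n : ℝ) ^ ε))
        * ∏ i, fTilde T m (p i) := by
  set s : Fin N → ℝ := fun i => (sphσ n).real (Aset T (p i))
  have hsum := sum_measureReal_Aset_le_of_mem_Fevent hp
  have hbound : m * ∑ i, s i ≤ N * (n : ℝ) ^ ε := by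
    rw [Finset.mul_sum]
    simpa using Finset.sum_le_sum fun i (_ : i ∈ Finset.univ) =>
      mul_measureReal_Aset_le hm hvol (hp.1 i)
  rw [bodyProb_forall_mem T m hm hp.1,
    Finset.prod_congr rfl fun i _ => fTilde_of_mem T m hm (hp.1 i),
    ← ENNReal.ofReal_prod_of_nonneg fun i _ => (exp_pos _).le,
    ← ENNReal.ofReal_mul (exp_pos _).le, ← exp_sum, ← exp_add]
  refine ENNReal.ofReal_le_ofReal (exp_le_exp.2 ?_)
  have hδ : 0 ≤ (N : ℝ) * exp (-(n : ℝ) ^ (0.1 : ℝ)) := by positivity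
  have := mul_le_mul_of_nonneg_left hbound hδ
  have := mul_le_mul_of_nonneg_left hsum hm
  simp only [Finset.sum_neg_distrib, ← Finset.mul_sum]
  nlinarith

end RandomBody

lemma exp_sq_mul_exp_neg_mul_le {a b N : ℝ} (ha : 0 ≤ a) (hab : 4 * a + 1 ≤ b) (hN₀ : 0 ≤ N)
    (hN : N ≤ exp a) : exp (N ^ 2 * exp (-b) * a) ≤ 1 + exp (-a) := by
  set C := N ^ 2 * exp (-b) * a
  have hC₀ : 0 ≤ C := by positivity
  have hC : C ≤ exp (-a - 1) :=
    calc C ≤ exp a ^ 2 * exp (-b) * exp a :=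
          mul_le_mul (mul_le_mul_of_nonneg_right (pow_le_pow_left₀ hN₀ hN 2) (exp_pos _).le)
            (by linarith [add_one_le_exp a]) ha (by positivity)
      _ = exp (3 * a - b) := by rw [← exp_nat_mul, ← exp_add, ← exp_add]; ring_nf
      _ ≤ exp (-a - 1) := exp_le_exp.2 (by linarith)
  have hexp : exp (-a - 1) * 2 ≤ exp (-a) := by
    have he : 2 ≤ exp 1 := by linarith [add_one_le_exp (1 : ℝ)]
    calc exp (-a - 1) * 2 = exp (-a) * (2 / exp 1) := by
          rw [sub_eq_add_neg, exp_add, exp_neg 1]; ring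
      _ ≤ exp (-a) * 1 := by gcongr; rwa [div_le_one (exp_pos 1)]
      _ = exp (-a) := mul_one _
  have hC₁ : |C| ≤ 1 := by
    rw [abs_of_nonneg hC₀]
    linarith [exp_le_one_iff.2 (by linarith : -a ≤ 0)]
  have := (abs_le.1 (abs_exp_sub_one_le hC₁)).2
  rw [abs_of_nonneg hC₀] at this
  linarith

lemma eventually_four_mul_rpow_add_one_le :
    ∀ᶠ n : ℕ in atTop, 4 * (n : ℝ) ^ (1 / 100 : ℝ) + 1 ≤ (n : ℝ) ^ (0.1 : ℝ) := by
  have hgrow : Tendsto (fun n : ℕ => (n : ℝ) ^ (9 / 100 : ℝ)) atTop atTop :=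
    (tendsto_rpow_atTop (by norm_num)).comp tendsto_natCast_atTop_atTop
  filter_upwards [hgrow.eventually_ge_atTop 5, eventually_ge_atTop 1] with n h5 hn
  have hn' : (1 : ℝ) ≤ n := by exact_mod_cast hn
  have ha : 1 ≤ (n : ℝ) ^ (1 / 100 : ℝ) := Real.one_le_rpow hn' (by norm_num)
  have hsplit : (n : ℝ) ^ (0.1 : ℝ) = (n : ℝ) ^ (1 / 100 : ℝ) * (n : ℝ) ^ (9 / 100 : ℝ) := by
    rw [← Real.rpow_add (by linarith)]; norm_num
  rw [hsplit]
  nlinarith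

/-- Lemma 2(iii): There exist `ε₀ > 0`, `ε₁ > 0` and `n₀ ∈ ℕ` such that for all
`n ≥ n₀`, every deletion profile `T`, every `m > 0` satisfying condition (vol2), and every
`N ∈ ℕ` with `N ≤ e^{n^{ε₀}}`:
`E[Vol_{(ℝ^n)^N}(K_{T,m}^N ∩ F)] ≤ (1 + e^{-n^{ε₁}})·(E[Vol(K_{T,m})])^N`,
where `Vol_{(ℝ^n)^N}` is Lebesgue measure on `(ℝ^n)^N` and `K^N` the `N`-fold product. -/
theorem statement7 :
    ∃ ε₀ : ℝ, 0 < ε₀ ∧ ∃ ε₁ : ℝ, 0 < ε₁ ∧ ∃ n₀ : ℕ, ∀ n : ℕ, n₀ ≤ n →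
      ∀ T : DeletionProfile n, ∀ m : ℝ, 0 < m → vol2Cond T m ε₀ →
        ∀ N : ℕ, (N : ℝ) ≤ Real.exp ((n : ℝ) ^ ε₀) →
          bodyLExp T m
              (fun K => volume ({p : Fin N → Euc n | ∀ i, p i ∈ K} ∩ Fevent T N)) ≤
            (1 + ENNReal.ofReal (Real.exp (-(n : ℝ) ^ ε₁))) * (bodyLExp T m volume) ^ N := by
  obtain ⟨n₀, hn₀⟩ := eventually_atTop.1
    (eventually_four_mul_rpow_add_one_le.and (eventually_ge_atTop 1))
  refine ⟨1 / 100, by norm_num, 1 / 100, by norm_num, n₀, fun n hn T m hm hvol N hN => ?_⟩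
  obtain ⟨hab, hn1⟩ := hn₀ n hn
  have : NeZero n := ⟨by omega⟩
  let c := ENNReal.ofReal (exp (N ^ 2 * exp (-(n : ℝ) ^ (0.1 : ℝ)) * (n : ℝ) ^ (1 / 100 : ℝ)))
  have hF := T.measurableSet_Fevent N
  calc bodyLExp T m (fun K => volume ({p : Fin N → Euc n | ∀ i, p i ∈ K} ∩ Fevent T N))
      = ∫⁻ p in Fevent T N, bodyProb T m (fun K => ∀ i, p i ∈ K) := by
        simp_rw [← Measure.restrict_apply' hF]
        exact bodyLExp_measure_setOf_eq_lintegral T m _ (T.measurableSet_forall_mem_Kbody · N)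
    _ ≤ ∫⁻ p in Fevent T N, c * ∏ i, fTilde T m (p i) :=
        setLIntegral_mono' hF fun p hp => bodyProb_forall_mem_le_of_mem_Fevent hm.le hvol hp
    _ ≤ ∫⁻ p : Fin N → Euc n, c * ∏ i, fTilde T m (p i) := setLIntegral_le_lintegral _ _
    _ = c * bodyLExp T m volume ^ N := by
        rw [lintegral_const_mul' _ _ ENNReal.ofReal_ne_top, volume_pi,
          lintegral_pi_prod_eq_pow _ (measurable_fTilde T m), bodyLExp_volume]
    _ ≤ _ := by
        gcongr
        rw [← ENNReal.ofReal_one, ← ENNReal.ofReal_add zero_le_one (exp_pos _).le]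
        exact ENNReal.ofReal_le_ofReal
          (exp_sq_mul_exp_neg_mul_le (by positivity) hab N.cast_nonneg hN)
end

section
/- Let c > 0, let x₁ < x₂, y₁ ≤ y₂, y₁' ≤ y₂' be real numbers, and let {f_α}_{α ∈ I} be a family of twice-differentiable real-valued functions on [x₁, x₂] with the property that for every triplet (x, y, y') ∈ [x₁,x₂] × [y₁,y₂] × [y₁',y₂'] there exists α ∈ I such that f_α(x) = y, f_α'(x) = y', and f_α''(t) ≤ c for all t ∈ [x₁, x₂]. Then for every twice-differentiable function g : [x₁, x₂] → [y₁, y₂] satisfying g'(x) ∈ [y₁', y₂'] and g''(x) > c for all x ∈ [x₁, x₂], there exists a subset I' ⊆ I such that g(x) = sup_{α ∈ I'} f_α(x) for every x ∈ [x₁, x₂]. (Lemma 6: representing a strongly convex function as a supremum of a subfamily.) -/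
/-!
At each `x₀` the hypothesis on the family supplies `f_α` agreeing with `g` to first order at `x₀`
with `f_α'' ≤ c < g''`. Then `g - f_α` is convex with a double zero at `x₀`, hence nonnegative:
`f_α` is a minorant of `g` touching it at `x₀`. So `g` is the supremum of its minorants in the
family.
-/

open Set

theorem ConvexOn.add_mul_sub_le_of_hasDerivWithinAt {S : Set ℝ} {h : ℝ → ℝ} {h' x₀ x : ℝ}
    (hconv : ConvexOn ℝ S h) (hx₀ : x₀ ∈ S) (hx : x ∈ S) (hd : HasDerivWithinAt h h' S x₀) :
    h x₀ + h' * (x - x₀) ≤ h x := by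
  rcases lt_trichotomy x x₀ with hlt | rfl | hgt
  · have hslope := hconv.slope_le_of_hasDerivWithinAt hx hx₀ hlt hd
    rw [slope_def_field, div_le_iff₀ (sub_pos.2 hlt)] at hslope
    linarith
  · simp
  · have hslope := hconv.le_slope_of_hasDerivWithinAt hx₀ hx hgt hd
    rw [slope_def_field, le_div_iff₀ (sub_pos.2 hgt)] at hslope
    linarith

theorem convexOn_of_hasDerivWithinAt2_nonneg' {D : Set ℝ} (hD : Convex ℝ D)
    {h h' h'' : ℝ → ℝ}
    (hd : ∀ t ∈ D, HasDerivWithinAt h (h' t) D t ∧ HasDerivWithinAt h' (h'' t) D t)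
    (hnonneg : ∀ t ∈ D, 0 ≤ h'' t) : ConvexOn ℝ D h :=
  convexOn_of_hasDerivWithinAt2_nonneg hD (fun t ht => (hd t ht).1.continuousWithinAt)
    (fun t ht => (hd t (interior_subset ht)).1.mono interior_subset)
    (fun t ht => (hd t (interior_subset ht)).2.mono interior_subset)
    (fun t ht => hnonneg t (interior_subset ht))

theorem le_of_tangent_of_hasDerivWithinAt2_le {D : Set ℝ} (hD : Convex ℝ D)
    {f f' f'' g g' g'' : ℝ → ℝ} {x₀ : ℝ}
    (hf : ∀ t ∈ D, HasDerivWithinAt f (f' t) D t ∧ HasDerivWithinAt f' (f'' t) D t)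
    (hg : ∀ t ∈ D, HasDerivWithinAt g (g' t) D t ∧ HasDerivWithinAt g' (g'' t) D t)
    (hx₀ : x₀ ∈ D) (hval : f x₀ = g x₀) (hder : f' x₀ = g' x₀)
    (hf''g'' : ∀ t ∈ D, f'' t ≤ g'' t) {x : ℝ} (hx : x ∈ D) :
    f x ≤ g x := by
  have hconv : ConvexOn ℝ D (fun t => g t - f t) :=
    convexOn_of_hasDerivWithinAt2_nonneg' hD
      (fun t ht => ⟨(hg t ht).1.sub (hf t ht).1, (hg t ht).2.sub (hf t ht).2⟩)
      (fun t ht => sub_nonneg.2 (hf''g'' t ht))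
  have htangent := hconv.add_mul_sub_le_of_hasDerivWithinAt hx₀ hx
    ((hg x₀ hx₀).1.sub (hf x₀ hx₀).1)
  simp only [hval, hder, sub_self, zero_mul, add_zero] at htangent
  linarith

theorem exists_iSup_eq_of_forall_exists_touching_minorant {ι α β : Type*}
    [ConditionallyCompleteLattice β] {s : Set α} {f : ι → α → β} {g : α → β}
    (h : ∀ x ∈ s, ∃ i, (∀ t ∈ s, f i t ≤ g t) ∧ f i x = g x) :
    ∃ I : Set ι, ∀ x ∈ s, g x = ⨆ i : I, f i x := by
  refine ⟨{i | ∀ t ∈ s, f i t ≤ g t}, fun x hx => ?_⟩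
  obtain ⟨i, hi, hix⟩ := h x hx
  have : Nonempty {i | ∀ t ∈ s, f i t ≤ g t} := ⟨⟨i, hi⟩⟩
  refine le_antisymm ?_ (ciSup_le fun j => j.2 x hx)
  calc g x = f i x := hix.symm
    _ ≤ ⨆ j : {i | ∀ t ∈ s, f i t ≤ g t}, f j x :=
      le_ciSup (f := fun j : {i | ∀ t ∈ s, f i t ≤ g t} => f j x)
        ⟨g x, by rintro _ ⟨j, rfl⟩; exact j.2 x hx⟩ ⟨i, hi⟩

theorem statement16_general {ι : Type*} (c x₁ x₂ y₁ y₂ y₁' y₂' : ℝ)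
    (f f' f'' : ι → ℝ → ℝ)
    (hf : ∀ α, ∀ t ∈ Icc x₁ x₂,
      HasDerivWithinAt (f α) (f' α t) (Icc x₁ x₂) t ∧
      HasDerivWithinAt (f' α) (f'' α t) (Icc x₁ x₂) t)
    (hfam : ∀ x ∈ Icc x₁ x₂, ∀ y ∈ Icc y₁ y₂, ∀ y' ∈ Icc y₁' y₂',
      ∃ α, f α x = y ∧ f' α x = y' ∧ ∀ t ∈ Icc x₁ x₂, f'' α t ≤ c)
    (g g' g'' : ℝ → ℝ)
    (hg : ∀ t ∈ Icc x₁ x₂,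
      HasDerivWithinAt g (g' t) (Icc x₁ x₂) t ∧
      HasDerivWithinAt g' (g'' t) (Icc x₁ x₂) t)
    (hgval : ∀ x ∈ Icc x₁ x₂, g x ∈ Icc y₁ y₂)
    (hgder : ∀ x ∈ Icc x₁ x₂, g' x ∈ Icc y₁' y₂')
    (hgconv : ∀ x ∈ Icc x₁ x₂, c < g'' x) :
    ∃ I' : Set ι, ∀ x ∈ Icc x₁ x₂, g x = ⨆ α : I', f (α : ι) x := by
  refine exists_iSup_eq_of_forall_exists_touching_minorant fun x₀ hx₀ => ?_
  obtain ⟨α, hval, hder, hf''⟩ := hfam x₀ hx₀ (g x₀) (hgval x₀ hx₀) (g' x₀) (hgder x₀ hx₀)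
  exact ⟨α, fun t ht => le_of_tangent_of_hasDerivWithinAt2_le (convex_Icc x₁ x₂) (hf α) hg hx₀
    hval hder (fun s hs => (hf'' s hs).trans (hgconv s hs).le) ht, hval⟩

/-- Lemma 6: Let `c > 0`, let `x₁ < x₂`, `y₁ ≤ y₂`, `y₁' ≤ y₂'`, and let
`{f_α}` be a family of twice-differentiable functions on `[x₁, x₂]` such that for every
triplet `(x, y, y') ∈ [x₁,x₂] × [y₁,y₂] × [y₁',y₂']` there exists `α` with `f_α(x) = y`,
`f_α'(x) = y'`, and `f_α''(t) ≤ c` for all `t ∈ [x₁,x₂]`. Then every twice-differentiable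
`g : [x₁,x₂] → [y₁,y₂]` with `g' ∈ [y₁',y₂']` and `g'' > c` on `[x₁,x₂]` is the pointwise
supremum of a subfamily: there is `I'` with `g(x) = sup_{α ∈ I'} f_α(x)` on `[x₁,x₂]`. -/
theorem statement16 {ι : Type*} (c x₁ x₂ y₁ y₂ y₁' y₂' : ℝ)
    (hc : 0 < c) (hx : x₁ < x₂) (hy : y₁ ≤ y₂) (hy' : y₁' ≤ y₂')
    (f f' f'' : ι → ℝ → ℝ)
    (hf : ∀ α, ∀ t ∈ Icc x₁ x₂,
      HasDerivWithinAt (f α) (f' α t) (Icc x₁ x₂) t ∧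
      HasDerivWithinAt (f' α) (f'' α t) (Icc x₁ x₂) t)
    (hfam : ∀ x ∈ Icc x₁ x₂, ∀ y ∈ Icc y₁ y₂, ∀ y' ∈ Icc y₁' y₂',
      ∃ α, f α x = y ∧ f' α x = y' ∧ ∀ t ∈ Icc x₁ x₂, f'' α t ≤ c)
    (g g' g'' : ℝ → ℝ)
    (hg : ∀ t ∈ Icc x₁ x₂,
      HasDerivWithinAt g (g' t) (Icc x₁ x₂) t ∧
      HasDerivWithinAt g' (g'' t) (Icc x₁ x₂) t)
    (hgval : ∀ x ∈ Icc x₁ x₂, g x ∈ Icc y₁ y₂)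
    (hgder : ∀ x ∈ Icc x₁ x₂, g' x ∈ Icc y₁' y₂')
    (hgconv : ∀ x ∈ Icc x₁ x₂, c < g'' x) :
    ∃ I' : Set ι, ∀ x ∈ Icc x₁ x₂, g x = ⨆ α : I', f (α : ι) x :=
  statement16_general c x₁ x₂ y₁ y₂ y₁' y₂' f f' f'' hf hfam g g' g'' hg hgval hgder hgconv
end

section
/- There exists n₀ ∈ ℕ such that for all n ≥ n₀, all a ∈ [2, 200] and all b ∈ [−1000, 1000], there exists a unique affine function f : ℝ → ℝ with negative slope satisfying both f(δ₀(1+δ₁b)) = √(1−(δ₀(1+δ₁b))²) and min_{x ∈ ℝ} √(x² + f(x)²) = a·δ₀ (i.e., the line {(x, f(x)) : x ∈ ℝ} passes through the point of the unit circle at abscissa δ₀(1+δ₁b) and has distance a·δ₀ from the origin). -/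
open MeasureTheory Real
open scoped ENNReal

noncomputable section

/-- The profile of a set `L ⊆ ℝ^n`: `g_L(r) = 1 − σ({θ ∈ S^{n-1} : rθ ∈ L})`. -/
def profileFn (n : ℕ) (L : Set (Euc n)) (r : ℝ) : ℝ :=
  1 - (sphσ n {θ : Sph n | r • (θ : Euc n) ∈ L}).toReal

/-- `δ₀ = n^{-1/4}`. -/
def del0 (n : ℕ) : ℝ := (n : ℝ) ^ (-(1/4) : ℝ)

/-- `δ₁ = n^{-0.99}`. -/
def del1 (n : ℕ) : ℝ := (n : ℝ) ^ (-(0.99) : ℝ)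

/-- `Ψ(x) = c_n ∫_{min(x,1)}^1 (1−t²)^{(n−3)/2} dt`, with
`c_n = (∫_{−1}^1 (1−t²)^{(n−3)/2} dt)⁻¹`: the normalized surface measure of the spherical cap
at height `x`. -/
def Psi (n : ℕ) (x : ℝ) : ℝ :=
  (∫ t in (-1 : ℝ)..(1 : ℝ), (1 - t ^ 2) ^ (((n : ℝ) - 3) / 2))⁻¹ *
    ∫ t in (min x 1)..(1 : ℝ), (1 - t ^ 2) ^ (((n : ℝ) - 3) / 2)

/-- `f` is an affine function with negative slope. -/
def AffineNegSlope (f : ℝ → ℝ) : Prop := ∃ s c : ℝ, s < 0 ∧ ∀ x, f x = s * x + c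

/-- The line `{(x, f(x))}` meets the unit circle at abscissa `δ₀(1+δ₁b)`:
`f(δ₀(1+δ₁b)) = √(1−(δ₀(1+δ₁b))²)`. -/
def TouchesCircle (n : ℕ) (b : ℝ) (f : ℝ → ℝ) : Prop :=
  f (del0 n * (1 + del1 n * b)) = Real.sqrt (1 - (del0 n * (1 + del1 n * b)) ^ 2)

/-- The line `{(x, f(x))}` has distance `a·δ₀` from the origin:
`min_{x∈ℝ} √(x² + f(x)²) = a·δ₀`. -/
def DistFromOrigin (n : ℕ) (a : ℝ) (f : ℝ → ℝ) : Prop :=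
  IsLeast {y : ℝ | ∃ x : ℝ, y = Real.sqrt (x ^ 2 + f x ^ 2)} (a * del0 n)

/-- The cone body `T_{a,b} = D_n ∩ {(x, y) ∈ ℝ × ℝ^{n−1} : |y| ≤ f(x)}`, where the first
coordinate of `z ∈ ℝ^n` plays the role of `x` and `|y| = √(‖z‖² − z₁²)`. -/
def coneBody (n : ℕ) [NeZero n] (f : ℝ → ℝ) : Set (Euc n) :=
  Dball n ∩ {z | Real.sqrt (‖z‖ ^ 2 - (inner ℝ z (EuclideanSpace.single (0 : Fin n) (1 : ℝ)) : ℝ) ^ 2)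
    ≤ f (inner ℝ z (EuclideanSpace.single (0 : Fin n) (1 : ℝ)) : ℝ)}

end

/-!
A line `y = s x + c` lies at distance `|c| / √(1 + s²)` from the origin, so a line of slope `s`
through `(x₀, y₀)` is at distance `r` exactly when `s` solves the quadratic
`(x₀² - r²) s² - 2 x₀ y₀ s + (y₀² - r²) = 0`. When `x₀² < r² < y₀²` its leading coefficient is
negative and its constant term positive, so the product of its roots is negative and it has
exactly one negative root. For `n` large, the point `(δ₀(1 + δ₁b), √(1 - δ₀²(1 + δ₁b)²))` and
`r = aδ₀` satisfy these inequalities, since `δ₁b → 0` and `δ₀ → 0`.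
-/

open Filter Topology

theorem existsUnique_neg_root_of_neg_of_pos {A B C : ℝ} (hA : A < 0) (hC : 0 < C) :
    ∃! s : ℝ, s < 0 ∧ A * s ^ 2 + B * s + C = 0 := by
  have hA0 : A ≠ 0 := hA.ne
  have hD : 0 ≤ B ^ 2 - 4 * A * C := by nlinarith [mul_neg_of_neg_of_pos hA hC]
  set q := √(B ^ 2 - 4 * A * C)
  have hq : q ^ 2 = B ^ 2 - 4 * A * C := Real.sq_sqrt hD
  have hBq : B < q := by nlinarith [Real.sqrt_nonneg (B ^ 2 - 4 * A * C)]
  set s := (-B + q) / (2 * A)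
  have hs : s < 0 := div_neg_of_pos_of_neg (by linarith) (by linarith)
  have hroot_s : A * s ^ 2 + B * s + C = 0 := by
    have h : A * s ^ 2 + B * s + C = (q ^ 2 - (B ^ 2 - 4 * A * C)) / (4 * A) := by
      simp only [s]
      field_simp
      ring
    rw [h, hq, sub_self, zero_div]
  refine ⟨s, ⟨hs, hroot_s⟩, fun t ⟨ht, hroot⟩ => ?_⟩
  by_contra hne
  -- Vieta: two distinct roots have product `C / A < 0`.
  have hprod : (t - s) * (A * (t * s) - C) = 0 := by
    linear_combination s * hroot - t * hroot_s
  have : A * (t * s) - C = 0 := (mul_eq_zero.mp hprod).resolve_left (sub_ne_zero.mpr hne)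
  nlinarith [mul_pos (neg_pos.mpr ht) (neg_pos.mpr hs)]

theorem isLeast_sqrt_sq_add_sq_line (s c : ℝ) :
    IsLeast {y : ℝ | ∃ x : ℝ, y = √(x ^ 2 + (s * x + c) ^ 2)} (|c| / √(1 + s ^ 2)) := by
  have hs : 0 < 1 + s ^ 2 := by positivity
  constructor
  · refine ⟨-(s * c) / (1 + s ^ 2), ?_⟩
    have hfoot : (-(s * c) / (1 + s ^ 2)) ^ 2 + (s * (-(s * c) / (1 + s ^ 2)) + c) ^ 2
        = c ^ 2 / (1 + s ^ 2) := by
      field_simp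
      ring
    rw [hfoot, Real.sqrt_div (sq_nonneg c), Real.sqrt_sq_eq_abs]
  · rintro y ⟨x, rfl⟩
    rw [Real.le_sqrt (by positivity) (by positivity), div_pow, sq_abs, Real.sq_sqrt hs.le,
      div_le_iff₀ hs]
    nlinarith [sq_nonneg ((1 + s ^ 2) * x + s * c)]

theorem isLeast_sqrt_sq_add_sq_line_iff {s c r : ℝ} (hr : 0 ≤ r) :
    IsLeast {y : ℝ | ∃ x : ℝ, y = √(x ^ 2 + (s * x + c) ^ 2)} r ↔
      c ^ 2 = r ^ 2 * (1 + s ^ 2) := by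
  have hs : 0 < √(1 + s ^ 2) := Real.sqrt_pos.mpr (by positivity)
  rw [(isLeast_sqrt_sq_add_sq_line s c).isLeast_iff_eq, div_eq_iff hs.ne',
    ← sq_eq_sq₀ (abs_nonneg c) (by positivity), sq_abs, mul_pow, Real.sq_sqrt (by positivity)]

theorem existsUnique_affineNegSlope_through_of_isLeast {x₀ y₀ r : ℝ} (hr : 0 ≤ r)
    (hx₀ : x₀ ^ 2 < r ^ 2) (hy₀ : r ^ 2 < y₀ ^ 2) :
    ∃! f : ℝ → ℝ, AffineNegSlope f ∧ f x₀ = y₀ ∧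
      IsLeast {y : ℝ | ∃ x : ℝ, y = √(x ^ 2 + f x ^ 2)} r := by
  obtain ⟨s, ⟨hs, hroot⟩, huniq⟩ := existsUnique_neg_root_of_neg_of_pos
    (A := x₀ ^ 2 - r ^ 2) (B := -(2 * x₀ * y₀)) (C := y₀ ^ 2 - r ^ 2) (by linarith) (by linarith)
  refine ⟨fun x => s * x + (y₀ - s * x₀), ⟨⟨s, _, hs, fun _ => rfl⟩, by ring, ?_⟩, ?_⟩
  · exact (isLeast_sqrt_sq_add_sq_line_iff hr).2 (by linear_combination hroot)
  · rintro g ⟨⟨s', c', hs', hg⟩, hthrough, hdist⟩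
    obtain rfl : g = fun x => s' * x + c' := funext hg
    obtain rfl : c' = y₀ - s' * x₀ := eq_sub_of_add_eq' hthrough
    obtain rfl : s' = s := huniq s'
      ⟨hs', by linear_combination (isLeast_sqrt_sq_add_sq_line_iff hr).1 hdist⟩
    rfl

theorem tendsto_natCast_rpow_neg_atTop {y : ℝ} (hy : 0 < y) :
    Tendsto (fun n : ℕ => (n : ℝ) ^ (-y)) atTop (𝓝 0) :=
  (tendsto_rpow_neg_atTop hy).comp tendsto_natCast_atTop_atTop

theorem tendsto_del0_atTop : Tendsto del0 atTop (𝓝 0) :=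
  tendsto_natCast_rpow_neg_atTop (by norm_num)

theorem tendsto_del1_atTop : Tendsto del1 atTop (𝓝 0) :=
  tendsto_natCast_rpow_neg_atTop (by norm_num)

/-- There exists `n₀ ∈ ℕ` such that for all `n ≥ n₀`, all `a ∈ [2, 200]` and all
`b ∈ [−1000, 1000]`, there exists a unique affine function `f : ℝ → ℝ` with negative slope
satisfying both `f(δ₀(1+δ₁b)) = √(1−(δ₀(1+δ₁b))²)` and `min_{x∈ℝ} √(x² + f(x)²) = a·δ₀`. -/
theorem statement18 :
    ∃ n₀ : ℕ, ∀ n : ℕ, n₀ ≤ n →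
      ∀ a ∈ Set.Icc (2 : ℝ) 200, ∀ b ∈ Set.Icc (-1000 : ℝ) 1000,
        ∃! f : ℝ → ℝ, AffineNegSlope f ∧ TouchesCircle n b f ∧ DistFromOrigin n a f := by
  have hδ₀ := tendsto_del0_atTop.eventually (gt_mem_nhds (show (0 : ℝ) < 1 / 201 by norm_num))
  have hδ₁ := tendsto_del1_atTop.eventually (gt_mem_nhds (show (0 : ℝ) < 1 / 1000 by norm_num))
  obtain ⟨n₀, hn₀⟩ := eventually_atTop.mp ((eventually_gt_atTop 0).and (hδ₀.and hδ₁))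
  refine ⟨n₀, fun n hn a ⟨ha₂, ha₂₀₀⟩ b ⟨hb₁, hb₂⟩ => ?_⟩
  obtain ⟨hn, hδ₀n, hδ₁n⟩ := hn₀ n hn
  have hδ₀pos : 0 < del0 n := Real.rpow_pos_of_pos (Nat.cast_pos.mpr hn) _
  have hδ₁pos : 0 < del1 n := Real.rpow_pos_of_pos (Nat.cast_pos.mpr hn) _
  have hperturb : |del1 n * b| < 1 := by
    rw [abs_mul, abs_of_pos hδ₁pos]
    nlinarith [abs_le.mpr ⟨hb₁, hb₂⟩]
  obtain ⟨ht₁, ht₂⟩ := abs_lt.mp hperturb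
  set x₀ := del0 n * (1 + del1 n * b)
  have hx₀ : x₀ ^ 2 < (a * del0 n) ^ 2 := by
    apply sq_lt_sq' <;> nlinarith
  have hx₀r : x₀ ^ 2 + (a * del0 n) ^ 2 < 1 := by
    have h1t : (1 + del1 n * b) ^ 2 < 4 := by nlinarith
    have ha : a ^ 2 ≤ 40000 := by nlinarith
    have hδ₀sq : del0 n ^ 2 < 1 / 40401 := by nlinarith
    simp only [x₀, mul_pow]
    nlinarith [sq_nonneg (del0 n)]
  refine existsUnique_affineNegSlope_through_of_isLeast (by positivity) hx₀ ?_
  rw [Real.sq_sqrt (by nlinarith)]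
  linarith
end
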